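/- Let t₁, t₂ ∈ ℝ, ρ_{t₁,t₂} = (1/2)(L_{[t₁,t₁+1]} × δ₀ + δ₀ × L_{[t₂,t₂+1]}), and T(λ₁,λ₂) := λ₁(2t₁+1) − λ₂(2t₂+1). Then (λ₁, λ₂) ∈ ℝ² \ {(0,0)} is a zero of the Fourier transform of ρ_{t₁,t₂} if and only if e^{πi(λ₁(2t₁+1) − λ₂(2t₂+1))} · sin(πλ₁)/(πλ₁) + sin(πλ₂)/(πλ₂) = 0, where sin(πx)/(πx) is interpreted as 1 when x = 0; consequently, every such zero satisfies either (λ₁, λ₂) ∈ (ℤ \ {0})², or T(λ₁,λ₂) ∈ ℤ together with (−1)^{T(λ₁,λ₂)} sin(πλ₁)/(πλ₁) + sin(πλ₂)/(πλ₂) = 0. -/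

import Mathlib

/-!
Each half of `ρ_{t₁,t₂}` is a unit segment, whose Fourier transform at `λ` is
`e^{-πiλ(2t+1)} · sin(πλ)/(πλ)` (shift the segment to `[-1/2, 1/2]`). Since the sinc values are
real, multiplying `ρ̂ = 0` by `e^{πiλ₂(2t₂+1)}` and conjugating gives the stated equation. Its
imaginary part reads `sin(πT) · sinc λ₁ = 0`: either `sinc λ₁ = 0`, and then the real part forces
`sinc λ₂ = 0`, or `T ∈ ℤ` and `e^{πiT} = (-1)^T`.
-/

open MeasureTheory Filter Set
open scoped Real ENNReal

/-- The additive measure of Lebesgue type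
`ρ_{t₁,t₂} = (1/2)(L_{[t₁,t₁+1]} × δ₀ + δ₀ × L_{[t₂,t₂+1]})` on `ℝ²`. -/
noncomputable def rho (t₁ t₂ : ℝ) : Measure (ℝ × ℝ) :=
  (1 / 2 : ℝ≥0∞) • ((volume.restrict (Icc t₁ (t₁ + 1))).prod (Measure.dirac 0)
    + (Measure.dirac (0 : ℝ)).prod (volume.restrict (Icc t₂ (t₂ + 1))))

/-- `Λ` is a spectrum of the measure `ρ` on `ℝ²`: it is countable, the exponentials
`e_λ(x) = e^{2πi λ·x}`, `λ ∈ Λ`, are pairwise orthogonal in `L²(ρ)`, and they are total: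
any `f ∈ L²(ρ)` orthogonal to all of them vanishes `ρ`-a.e. -/
def IsSpectrumOf (Λ : Set (ℝ × ℝ)) (ρ : Measure (ℝ × ℝ)) : Prop :=
  Λ.Countable ∧
  (∀ a ∈ Λ, ∀ b ∈ Λ, a ≠ b →
    ∫ x : ℝ × ℝ,
      Complex.exp ((2 * π * ((a.1 - b.1) * x.1 + (a.2 - b.2) * x.2) : ℝ) * Complex.I) ∂ρ = 0) ∧
  (∀ f : ℝ × ℝ → ℂ, MemLp f 2 ρ →
    (∀ a ∈ Λ,
      ∫ x : ℝ × ℝ,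
        f x * Complex.exp ((-2 * π * (a.1 * x.1 + a.2 * x.2) : ℝ) * Complex.I) ∂ρ = 0) →
    ∀ᵐ x ∂ρ, f x = 0)

/-- The Fourier transform of `ρ_{t₁,t₂}`: `ρ̂(ξ) = ∫ e^{-2πi ξ·x} dρ(x)`. -/
noncomputable def rhoHat (t₁ t₂ : ℝ) (ξ : ℝ × ℝ) : ℂ :=
  ∫ x : ℝ × ℝ,
    Complex.exp ((-2 * π * (ξ.1 * x.1 + ξ.2 * x.2) : ℝ) * Complex.I) ∂(rho t₁ t₂)

/-- Normalized sinc: `sin(πx)/(πx)`, interpreted as `1` at `x = 0`. -/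
noncomputable def nsinc (x : ℝ) : ℝ := if x = 0 then 1 else Real.sin (π * x) / (π * x)

theorem integral_exp_mul_mul_I_eq_sinc (ξ r : ℝ) :
    ∫ y in -r..r, Complex.exp ((ξ * y : ℝ) * Complex.I) = 2 * r * Real.sinc (ξ * r) := by
  rcases eq_or_ne ξ 0 with rfl | hξ
  · simp [two_mul]
  have h := intervalIntegral.integral_comp_mul_left
    (fun u : ℝ => Complex.exp (u * Complex.I)) (a := -r) (b := r) hξ
  simp only [Complex.ofReal_mul] at h ⊢
  rw [h, mul_neg, integral_exp_mul_I_eq_sinc, Complex.real_smul]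
  push_cast
  field_simp [Complex.ofReal_ne_zero.mpr hξ]

theorem integral_exp_mul_mul_I_eq_exp_mul_sinc (ξ a b : ℝ) :
    ∫ x in a..b, Complex.exp ((ξ * x : ℝ) * Complex.I)
      = (b - a) * Complex.exp ((ξ * ((a + b) / 2) : ℝ) * Complex.I)
          * Real.sinc (ξ * ((b - a) / 2)) := by
  set c := (a + b) / 2
  have hshift := intervalIntegral.integral_comp_add_right
    (fun x : ℝ => Complex.exp ((ξ * x : ℝ) * Complex.I)) (a := -((b - a) / 2))
    (b := (b - a) / 2) c
  have hsplit : ∀ y : ℝ, Complex.exp ((ξ * (y + c) : ℝ) * Complex.I)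
      = Complex.exp ((ξ * c : ℝ) * Complex.I) * Complex.exp ((ξ * y : ℝ) * Complex.I) := by
    intro y
    rw [← Complex.exp_add]
    push_cast
    ring_nf
  simp only [hsplit, intervalIntegral.integral_const_mul, integral_exp_mul_mul_I_eq_sinc] at hshift
  rw [show -((b - a) / 2) + c = a by ring, show (b - a) / 2 + c = b by ring] at hshift
  rw [← hshift]
  push_cast
  ring

theorem nsinc_eq_sinc (x : ℝ) : nsinc x = Real.sinc (π * x) := by
  simp [nsinc, Real.sinc, Real.pi_ne_zero]

theorem setIntegral_Icc_exp_eq_exp_mul_nsinc (l t : ℝ) :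
    ∫ x in Icc t (t + 1), Complex.exp ((-2 * π * (l * x) : ℝ) * Complex.I)
      = Complex.exp ((-(π * (l * (2 * t + 1))) : ℝ) * Complex.I) * nsinc l := by
  rw [integral_Icc_eq_integral_Ioc, ← intervalIntegral.integral_of_le (by linarith)]
  have h := integral_exp_mul_mul_I_eq_exp_mul_sinc (-2 * π * l) t (t + 1)
  simp only [mul_assoc] at h ⊢
  rw [h, nsinc_eq_sinc, show -2 * (π * (l * ((t + 1 - t) / 2))) = -(π * l) by ring,
    Real.sinc_neg, show -2 * (π * (l * ((t + (t + 1)) / 2))) = -(π * (l * (2 * t + 1))) by ring]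
  push_cast
  ring

theorem integral_prod_dirac {α β E : Type*} [MeasurableSpace α] [MeasurableSpace β]
    [MeasurableSingletonClass β] [NormedAddCommGroup E] [NormedSpace ℝ E]
    (μ : Measure α) [SFinite μ] (y : β) (f : α × β → E) :
    ∫ z, f z ∂μ.prod (Measure.dirac y) = ∫ x, f (x, y) ∂μ := by
  rw [Measure.prod_dirac, (measurableEmbedding_prod_mk_right y).integral_map]

theorem integral_dirac_prod {α β E : Type*} [MeasurableSpace α] [MeasurableSpace β]
    [MeasurableSingletonClass α] [NormedAddCommGroup E] [NormedSpace ℝ E]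
    (x : α) (ν : Measure β) [SFinite ν] (f : α × β → E) :
    ∫ z, f z ∂(Measure.dirac x).prod ν = ∫ y, f (x, y) ∂ν := by
  rw [Measure.dirac_prod, (measurableEmbedding_prodMk_left x).integral_map]

theorem integrable_exp_ofReal_mul_I {α : Type*} [MeasurableSpace α] (μ : Measure α)
    [IsFiniteMeasure μ] {g : α → ℝ} (hg : Measurable g) :
    Integrable (fun x => Complex.exp ((g x : ℂ) * Complex.I)) μ :=
  .of_bound (by fun_prop) 1 (ae_of_all _ fun x => (Complex.norm_exp_ofReal_mul_I _).le)

theorem rhoHat_eq_exp_mul_nsinc (t₁ t₂ l₁ l₂ : ℝ) :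
    rhoHat t₁ t₂ (l₁, l₂)
      = (1 / 2 : ℂ) * (Complex.exp ((-(π * (l₁ * (2 * t₁ + 1))) : ℝ) * Complex.I) * nsinc l₁
        + Complex.exp ((-(π * (l₂ * (2 * t₂ + 1))) : ℝ) * Complex.I) * nsinc l₂) := by
  have hint := fun (μ : Measure (ℝ × ℝ)) [IsFiniteMeasure μ] =>
    integrable_exp_ofReal_mul_I μ (g := fun x => -2 * π * (l₁ * x.1 + l₂ * x.2)) (by fun_prop)
  rw [rhoHat, rho, integral_smul_measure, integral_add_measure (hint _) (hint _),
    integral_prod_dirac, integral_dirac_prod]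
  simp only [mul_zero, add_zero, zero_add, ← setIntegral_Icc_exp_eq_exp_mul_nsinc, Complex.real_smul]
  norm_num

theorem exp_neg_mul_add_exp_neg_mul_eq_zero_iff (θ φ s₁ s₂ : ℝ) :
    Complex.exp ((-θ : ℝ) * Complex.I) * s₁ + Complex.exp ((-φ : ℝ) * Complex.I) * s₂ = 0 ↔
      Complex.exp ((θ - φ : ℝ) * Complex.I) * s₁ + s₂ = 0 := by
  -- conjugation fixes the real `s₁, s₂` and reverses the phases
  have hconj : Complex.exp ((θ - φ : ℝ) * Complex.I) * s₁ + s₂ = (starRingEnd ℂ)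
      (Complex.exp ((φ : ℝ) * Complex.I) *
        (Complex.exp ((-θ : ℝ) * Complex.I) * s₁ + Complex.exp ((-φ : ℝ) * Complex.I) * s₂)) := by
    rw [mul_add, ← mul_assoc, ← mul_assoc, ← Complex.exp_add, ← Complex.exp_add]
    simp only [map_add, map_mul, ← Complex.exp_conj, Complex.conj_ofReal, Complex.conj_I]
    push_cast
    ring_nf
    simp only [Complex.exp_zero, mul_one]
  rw [hconj, map_eq_zero, mul_eq_zero]
  simp [Complex.exp_ne_zero]

theorem nsinc_eq_zero_iff (l : ℝ) : nsinc l = 0 ↔ ∃ m : ℤ, m ≠ 0 ∧ l = m := by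
  rcases eq_or_ne l 0 with rfl | hl
  · simp [nsinc, eq_comm]
  rw [nsinc, if_neg hl, div_eq_zero_iff, Real.sin_eq_zero_iff]
  simp only [mul_eq_zero, Real.pi_ne_zero, hl, or_self, or_false]
  constructor
  · rintro ⟨n, hn⟩
    have hln : l = n := mul_left_cancel₀ Real.pi_ne_zero (by rw [← hn, mul_comm])
    exact ⟨n, by rintro rfl; simp [hln] at hl, hln⟩
  · rintro ⟨m, -, rfl⟩
    exact ⟨m, mul_comm _ _⟩

theorem eq_zero_or_exists_int_of_exp_mul_I_mul_add_eq_zero {θ s₁ s₂ : ℝ}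
    (h : Complex.exp (θ * Complex.I) * s₁ + s₂ = 0) :
    (s₁ = 0 ∧ s₂ = 0) ∨ ∃ m : ℤ, θ = m * π ∧ (-1 : ℝ) ^ m * s₁ + s₂ = 0 := by
  rw [Complex.exp_mul_I] at h
  have hre : Real.cos θ * s₁ + s₂ = 0 := by
    simpa [Complex.cos_ofReal_re] using congrArg Complex.re h
  have him : Real.sin θ * s₁ = 0 := by
    simpa [Complex.sin_ofReal_re] using congrArg Complex.im h
  rcases eq_or_ne s₁ 0 with hs₁ | hs₁
  · left
    exact ⟨hs₁, by simpa [hs₁] using hre⟩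
  · right
    obtain ⟨m, hm⟩ := Real.sin_eq_zero_iff.mp ((mul_eq_zero.mp him).resolve_right hs₁)
    exact ⟨m, hm.symm, by rwa [← hm, Real.cos_int_mul_pi] at hre⟩

theorem stmt19_general (t₁ t₂ l₁ l₂ : ℝ) :
    (rhoHat t₁ t₂ (l₁, l₂) = 0 ↔
      Complex.exp ((π * (l₁ * (2 * t₁ + 1) - l₂ * (2 * t₂ + 1)) : ℝ) * Complex.I) *
          (nsinc l₁ : ℂ) + (nsinc l₂ : ℂ) = 0) ∧
    (rhoHat t₁ t₂ (l₁, l₂) = 0 →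
      (((∃ m : ℤ, m ≠ 0 ∧ l₁ = (m : ℝ)) ∧ (∃ m : ℤ, m ≠ 0 ∧ l₂ = (m : ℝ))) ∨
        (∃ m : ℤ, l₁ * (2 * t₁ + 1) - l₂ * (2 * t₂ + 1) = (m : ℝ) ∧
          (-1 : ℝ) ^ m * nsinc l₁ + nsinc l₂ = 0))) := by
  have hzero : rhoHat t₁ t₂ (l₁, l₂) = 0 ↔
      Complex.exp ((π * (l₁ * (2 * t₁ + 1) - l₂ * (2 * t₂ + 1)) : ℝ) * Complex.I) * nsinc l₁
        + nsinc l₂ = 0 := by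
    rw [rhoHat_eq_exp_mul_nsinc, mul_eq_zero, or_iff_right (by norm_num),
      exp_neg_mul_add_exp_neg_mul_eq_zero_iff, mul_sub]
  refine ⟨hzero, fun h => ?_⟩
  rcases eq_zero_or_exists_int_of_exp_mul_I_mul_add_eq_zero (hzero.mp h) with
    ⟨h₁, h₂⟩ | ⟨m, hm, hsum⟩
  · exact .inl ⟨(nsinc_eq_zero_iff l₁).mp h₁, (nsinc_eq_zero_iff l₂).mp h₂⟩
  · exact .inr ⟨m, mul_left_cancel₀ Real.pi_ne_zero (by rw [hm, mul_comm]), hsum⟩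

theorem stmt19 (t₁ t₂ l₁ l₂ : ℝ) (hne : (l₁, l₂) ≠ (0, 0)) :
    (rhoHat t₁ t₂ (l₁, l₂) = 0 ↔
      Complex.exp ((π * (l₁ * (2 * t₁ + 1) - l₂ * (2 * t₂ + 1)) : ℝ) * Complex.I) *
          (nsinc l₁ : ℂ) + (nsinc l₂ : ℂ) = 0) ∧
    (rhoHat t₁ t₂ (l₁, l₂) = 0 →
      (((∃ m : ℤ, m ≠ 0 ∧ l₁ = (m : ℝ)) ∧ (∃ m : ℤ, m ≠ 0 ∧ l₂ = (m : ℝ))) ∨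
        (∃ m : ℤ, l₁ * (2 * t₁ + 1) - l₂ * (2 * t₂ + 1) = (m : ℝ) ∧
          (-1 : ℝ) ^ m * nsinc l₁ + nsinc l₂ = 0))) :=
  stmt19_general t₁ t₂ l₁ l₂
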